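/- Let δ ∈ (0, 1/4) and set s = ⌈log₂(1/(4δ))⌉. Suppose N ≥ max{(2s)^s, 3^(73s)} is a positive integer and that A ⊆ [N] satisfies |A| ≥ δN. Then R_2(A − A) ≥ 3^(−8) · N^(1/(8s + 8)). -/

import Mathlib

/-! Density increment. Say that `A` meets a set `S` at scale `c` (and offset `b`) if `A` hits the
cell `[b + z c, b + z c + 2 c)` of every `z ∈ S`. If `S` has density `≥ 7/10` in an interval of
length `M`, then for every `j ≤ M / 60` it meets its translate by `20 j`, so `A - A` has an element
within `2 c` of `20 j c`; these elements form a `2`-regular set of size `> M / 60`.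
Otherwise cut the interval into windows of length `ℓ = β ^ t`. Either some window carries
`6/5` times the current density and we pass to it, or the windows meeting `S` have density
`≥ 7/10` among all windows, and viewing each window as one point at scale `c ℓ` the dense case
gives more than `M / (60 ℓ) ≥ β / 60` elements. Starting from `A ⊆ [1, N]` of density
`δ ≥ 2 ^ (-(s + 2))`, after `8 s + 7` increments the density would exceed `7/10`, so with
`β = ⌊N ^ (1 / (8 s + 8))⌋` the dense case is reached and `R₂(A - A) ≥ β / 60`. -/

open scoped Classical Pointwise

/-- `a` and `b` are consecutive elements of the finite set `A` of integers. -/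
def ConsecIn (A : Finset ℤ) (a b : ℤ) : Prop :=
  a ∈ A ∧ b ∈ A ∧ a < b ∧ ∀ c ∈ A, c ≤ a ∨ b ≤ c

/-- `A` is `L`-regular: some real `X > 0` bounds all consecutive gaps between `X` and `L*X`. -/
def IsRegularSet (L : ℝ) (A : Finset ℤ) : Prop :=
  ∃ X : ℝ, 0 < X ∧ ∀ a b : ℤ, ConsecIn A a b →
    X ≤ (b : ℝ) - (a : ℝ) ∧ (b : ℝ) - (a : ℝ) ≤ L * X

/-- `R_L(A)`: the maximum cardinality of an `L`-regular subset of `A`. -/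
noncomputable def regMax (L : ℝ) (A : Finset ℤ) : ℕ :=
  (A.powerset.filter fun B => IsRegularSet L B).sup Finset.card

/-- `A` is strictly convex: the consecutive differences of its increasing
enumeration are strictly increasing. -/
def IsConvexSet (A : Finset ℤ) : Prop :=
  ∀ a b c : ℤ, ConsecIn A a b → ConsecIn A b c → b - a < c - b

/-- `C(A)`: the maximum cardinality of a strictly convex subset of `A`. -/
noncomputable def convMax (A : Finset ℤ) : ℕ :=
  (A.powerset.filter fun B => IsConvexSet B).sup Finset.card

open Finset

-- Cells have width `2 c` so that the cells of `ℓ` consecutive points at scale `c` lie in a single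
-- cell at scale `c ℓ` (`MeetsCells.coarsen`).
def MeetsCells (A : Finset ℤ) (c b : ℤ) (S : Finset ℤ) : Prop :=
  ∀ z ∈ S, ∃ a ∈ A, b + z * c ≤ a ∧ a < b + z * c + 2 * c

namespace MeetsCells

variable {A S : Finset ℤ} {c b : ℤ}

theorem mono {S' : Finset ℤ} (h : MeetsCells A c b S) (hS' : S' ⊆ S) : MeetsCells A c b S' :=
  fun z hz => h z (hS' hz)

theorem coarsen (h : MeetsCells A c b S) (hc : 0 ≤ c) (u : ℤ) {ℓ : ℤ} (hℓ : 0 < ℓ) :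
    MeetsCells A (c * ℓ) (b + u * c) (S.image fun z => (z - u) / ℓ) := by
  simp only [MeetsCells, mem_image, forall_exists_index, and_imp, forall_apply_eq_imp_iff₂]
  intro z hz
  obtain ⟨a, ha, hlo, hhi⟩ := h z hz
  have hdiv := Int.ediv_mul_le (z - u) hℓ.ne'
  have hlt : z - u + 1 ≤ ((z - u) / ℓ + 1) * ℓ := Int.lt_ediv_add_one_mul_self (z - u) hℓ
  refine ⟨a, ha, ?_, ?_⟩
  · nlinarith [mul_le_mul_of_nonneg_right hdiv hc]
  · nlinarith [mul_le_mul_of_nonneg_right hlt hc, mul_le_mul_of_nonneg_left hℓ hc]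

theorem exists_sub_mem_sub (h : MeetsCells A c b S) {z t : ℤ} (hz : z ∈ S) (hzt : z + t ∈ S) :
    ∃ d ∈ A - A, t * c - 2 * c < d ∧ d < t * c + 2 * c := by
  obtain ⟨a, ha, hlo, hhi⟩ := h _ hzt
  obtain ⟨a', ha', hlo', hhi'⟩ := h _ hz
  exact ⟨a - a', sub_mem_sub ha ha', by linarith, by linarith⟩

end MeetsCells

theorem exists_mem_add_mem_of_subset_Ico {S : Finset ℤ} {u t : ℤ} {M : ℕ}
    (hS : S ⊆ Ico u (u + M)) (ht : 0 ≤ t) (hcard : M + t < 2 * (#S : ℤ)) :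
    ∃ z ∈ S, z + t ∈ S := by
  have hS' : S ⊆ Ico u (u + M + t) := fun z hz => by
    have := mem_Ico.1 (hS hz); exact mem_Ico.2 ⟨this.1, by omega⟩
  have hshift : S.image (· + t) ⊆ Ico u (u + M + t) := fun w hw => by
    obtain ⟨z, hz, rfl⟩ := mem_image.1 hw
    have := mem_Ico.1 (hS hz); exact mem_Ico.2 ⟨by omega, by omega⟩
  obtain ⟨w, hw⟩ := inter_nonempty_of_card_lt_card_add_card hS' hshift (by
    rw [card_image_of_injective _ (add_left_injective t), Int.card_Ico]; omega)
  obtain ⟨z, hz, rfl⟩ := mem_image.1 (mem_inter.1 hw).2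
  exact ⟨z, hz, (mem_inter.1 hw).1⟩

theorem isRegularSet_image_range {g : ℕ → ℤ} (hg : StrictMono g) {L X : ℝ} (hX : 0 < X)
    (hgap : ∀ i, X ≤ (g (i + 1) : ℝ) - g i ∧ (g (i + 1) : ℝ) - g i ≤ L * X) (n : ℕ) :
    IsRegularSet L ((range n).image g) := by
  refine ⟨X, hX, ?_⟩
  rintro x y ⟨hx, hy, hxy, hbetween⟩
  obtain ⟨i, -, rfl⟩ := mem_image.1 hx
  obtain ⟨j, hj, rfl⟩ := mem_image.1 hy
  have hij : i < j := hg.lt_iff_lt.1 hxy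
  obtain rfl : j = i + 1 := by
    by_contra hne
    have hmem : g (i + 1) ∈ (range n).image g :=
      mem_image_of_mem g (mem_range.2 (by rw [mem_range] at hj; omega))
    rcases hbetween _ hmem with h | h
    · exact (hg (Nat.lt_succ_self i)).not_ge h
    · exact (hg (by omega : i + 1 < j)).not_ge h
  exact hgap i

theorem card_le_regMax {L : ℝ} {A B : Finset ℤ} (hBA : B ⊆ A) (hB : IsRegularSet L B) :
    #B ≤ regMax L A :=
  le_sup (f := card) (mem_filter.2 ⟨mem_powerset.2 hBA, hB⟩)

theorem exists_isRegularSet_of_dense {A S : Finset ℤ} {c b u : ℤ} {M : ℕ} (hc : 0 < c)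
    (hM : 0 < M) (hS : S ⊆ Ico u (u + M)) (hdense : 7 * M ≤ 10 * #S) (hA : MeetsCells A c b S) :
    ∃ B ⊆ A - A, IsRegularSet 2 B ∧ M ≤ 60 * #B := by
  -- Beyond `M / 60`, `20 j c` itself is a filler value, so that `g` below is defined on all of `ℕ`.
  have hnear : ∀ j : ℕ, ∃ d : ℤ, (j ≤ M / 60 → d ∈ A - A) ∧
      20 * j * c - 2 * c < d ∧ d < 20 * j * c + 2 * c := by
    intro j
    by_cases hj : j ≤ M / 60
    · obtain ⟨z, hz, hzt⟩ :=
        exists_mem_add_mem_of_subset_Ico hS (by positivity : (0 : ℤ) ≤ 20 * j) (by omega)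
      obtain ⟨d, hd, hlo, hhi⟩ := hA.exists_sub_mem_sub hz hzt
      exact ⟨d, fun _ => hd, hlo, hhi⟩
    · exact ⟨20 * j * c, fun h => absurd h hj, by linarith, by linarith⟩
  choose g hgA hglo hghi using hnear
  have hgap : ∀ i, 16 * c < g (i + 1) - g i ∧ g (i + 1) - g i < 24 * c := fun i => by
    have h1 := hglo (i + 1)
    have h2 := hghi (i + 1)
    push_cast at h1 h2
    constructor <;> linarith [hglo i, hghi i]
  have hg : StrictMono g := strictMono_nat_of_lt_succ fun i => by linarith [hgap i]
  refine ⟨(range (M / 60 + 1)).image g, fun x hx => ?_, ?_, ?_⟩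
  · obtain ⟨j, hj, rfl⟩ := mem_image.1 hx
    exact hgA j (by rw [mem_range] at hj; omega)
  · refine isRegularSet_image_range hg (X := ((16 * c : ℤ) : ℝ)) (by positivity) (fun i => ?_) _
    constructor <;> norm_cast <;> linarith [hgap i]
  · rw [card_image_of_injective _ hg.injective, card_range]
    omega

theorem mem_Ico_of_ediv_eq {z u ℓ i : ℤ} (hℓ : 0 < ℓ) (h : (z - u) / ℓ = i) :
    z ∈ Ico (u + i * ℓ) (u + i * ℓ + ℓ) := by
  have hdiv := Int.ediv_mul_le (z - u) hℓ.ne'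
  have hlt := Int.lt_ediv_add_one_mul_self (z - u) hℓ
  rw [h] at hdiv hlt
  exact mem_Ico.2 ⟨by linarith, by linarith⟩

theorem ediv_mem_Ico_of_mem_Ico {z u : ℤ} {M ℓ : ℕ} (hℓ : 0 < ℓ) (hz : z ∈ Ico u (u + M)) :
    (z - u) / ℓ ∈ Ico (0 : ℤ) (M / ℓ + 1 : ℕ) := by
  have hz := mem_Ico.1 hz
  have hle : (z - u) / ℓ ≤ (M : ℤ) / ℓ := Int.ediv_le_ediv (by omega) (by omega)
  have hnonneg : 0 ≤ (z - u) / ℓ := Int.ediv_nonneg (by omega) (by omega)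
  rw [← Int.natCast_div] at hle
  exact mem_Ico.2 ⟨hnonneg, by push_cast at hle ⊢; omega⟩

theorem card_le_card_image_mul {α β R : Type*} [DecidableEq β] [Semiring R] [PartialOrder R]
    [IsOrderedRing R] {s : Finset α} {f : α → β} {a : R}
    (h : ∀ i ∈ s.image f, (#{x ∈ s | f x = i} : R) ≤ a) : (#s : R) ≤ #(s.image f) * a := by
  rw [card_eq_sum_card_image f s, Nat.cast_sum, ← nsmul_eq_mul]
  exact sum_le_card_nsmul _ _ _ h

theorem exists_isRegularSet_of_density {A S : Finset ℤ} {u c b : ℤ} {M β : ℕ} {η : ℝ}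
    (hβ : 6 ≤ β) (t : ℕ) (hc : 0 < c) (hη : 0 < η) (hM : β ^ (t + 1) ≤ M)
    (hηt : 7 / 10 ≤ (6 / 5) ^ t * η) (hS : S ⊆ Ico u (u + M)) (hdens : η * M ≤ #S)
    (hA : MeetsCells A c b S) : ∃ B ⊆ A - A, IsRegularSet 2 B ∧ β ≤ 60 * #B := by
  induction t generalizing S u c b M η with
  | zero =>
    rw [zero_add, pow_one] at hM
    rw [pow_zero, one_mul] at hηt
    have hdense : (7 * M : ℝ) ≤ 10 * #S := by nlinarith [(Nat.cast_nonneg M : (0 : ℝ) ≤ M)]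
    obtain ⟨B, hBA, hB, hMB⟩ :=
      exists_isRegularSet_of_dense hc (by omega) hS (by exact_mod_cast hdense) hA
    exact ⟨B, hBA, hB, hM.trans hMB⟩
  | succ t ih =>
    set ℓ := β ^ (t + 1)
    have hℓ : 0 < ℓ := by positivity
    have hβℓ : β * ℓ ≤ M := by rwa [pow_succ, mul_comm] at hM
    by_cases hfiber : ∃ i : ℤ, 6 / 5 * η * ℓ ≤ #{z ∈ S | (z - u) / ℓ = i}
    · obtain ⟨i, hi⟩ := hfiber
      refine ih (u := u + i * ℓ) hc (by positivity) le_rfl (by rw [pow_succ] at hηt; linarith)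
        (fun z hz => mem_Ico_of_ediv_eq (by positivity) (mem_filter.1 hz).2) hi
        (hA.mono (filter_subset _ _))
    · simp only [not_exists, not_le] at hfiber
      set Z := S.image fun z => (z - u) / ℓ
      have hcardZ : (#S : ℝ) ≤ #Z * (6 / 5 * η * ℓ) :=
        card_le_card_image_mul fun i _ => (hfiber i).le
      have hMZ : 5 * M ≤ 6 * (ℓ * #Z) := by
        have : (5 * M : ℝ) ≤ 6 * (ℓ * #Z) := le_of_mul_le_mul_left (by linarith) hη
        exact_mod_cast this
      have hZdense : 7 * (M / ℓ + 1) ≤ 10 * #Z := by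
        have hq := Nat.div_mul_le_self M ℓ
        refine Nat.le_of_mul_le_mul_right ?_ hℓ
        nlinarith
      have hZ : Z ⊆ Ico 0 (0 + (M / ℓ + 1 : ℕ)) := fun i hi => by
        obtain ⟨z, hz, rfl⟩ := mem_image.1 hi
        rw [zero_add]
        exact ediv_mem_Ico_of_mem_Ico hℓ (hS hz)
      obtain ⟨B, hBA, hB, hKB⟩ := exists_isRegularSet_of_dense (mul_pos hc (by positivity))
        (Nat.succ_pos _) hZ hZdense (hA.coarsen hc.le u (by positivity))
      have hβq : β ≤ M / ℓ := (Nat.le_div_iff_mul_le hℓ).2 hβℓ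
      exact ⟨B, hBA, hB, by omega⟩

theorem le_pow_ceil_logb {b x : ℝ} (hb : 1 < b) (hx : 0 < x) : x ≤ b ^ ⌈Real.logb b x⌉₊ := by
  rw [← Real.rpow_natCast, ← Real.logb_le_iff_le_rpow hb hx]
  exact Nat.le_ceil _

theorem seven_tenths_le_pow_mul {δ : ℝ} {s : ℕ} (hδ : 1 ≤ δ * 2 ^ (s + 2)) :
    7 / 10 ≤ (6 / 5) ^ (8 * s + 7) * δ := by
  have hδ0 : 0 < δ := by
    by_contra! h; nlinarith [pow_pos (two_pos : (0 : ℝ) < 2) (s + 2)]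
  calc (7 / 10 : ℝ) ≤ 7 / 10 * (δ * 2 ^ (s + 2)) := by linarith
    _ = (2 ^ s * (14 / 5)) * δ := by ring
    _ ≤ (((6 / 5) ^ 8) ^ s * (6 / 5) ^ 7) * δ := by
      gcongr
      · norm_num
      · norm_num
    _ = (6 / 5) ^ (8 * s + 7) * δ := by rw [pow_add, pow_mul]

theorem one_le_mul_two_pow_ceil_logb {δ : ℝ} (hδ : 0 < δ) :
    1 ≤ δ * 2 ^ (⌈Real.logb 2 (1 / (4 * δ))⌉₊ + 2) := by
  have h := le_pow_ceil_logb one_lt_two (by positivity : 0 < 1 / (4 * δ))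
  rw [div_le_iff₀ (by positivity)] at h
  rw [pow_add]
  linarith

theorem exists_nat_pow_le_lt_succ {x : ℝ} (hx : 0 ≤ x) {k m : ℕ} (hk : k ≠ 0)
    (hm : (m : ℝ) ^ k ≤ x) : ∃ n : ℕ, m ≤ n ∧ (n : ℝ) ^ k ≤ x ∧ x ^ ((1 : ℝ) / k) < n + 1 := by
  have hroot : 0 ≤ x ^ ((1 : ℝ) / k) := by positivity
  refine ⟨⌊x ^ ((1 : ℝ) / k)⌋₊, Nat.le_floor ?_, ?_, Nat.lt_floor_add_one _⟩
  · rw [one_div, Real.le_rpow_inv_iff_of_pos (by positivity) hx (by positivity), Real.rpow_natCast]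
    exact hm
  · calc (⌊x ^ ((1 : ℝ) / k)⌋₊ : ℝ) ^ k ≤ (x ^ ((1 : ℝ) / k)) ^ k := by
          gcongr; exact Nat.floor_le hroot
      _ = x := by rw [one_div, Real.rpow_inv_natCast_pow hx hk]

theorem stmt5_general (δ : ℝ) (hδ0 : 0 < δ) (hδ1 : δ < 1 / 4)
    (s : ℕ) (hs : s = ⌈Real.logb 2 (1 / (4 * δ))⌉₊)
    (N : ℕ) (hN2 : 3 ^ (73 * s) ≤ N)
    (A : Finset ℤ) (hA : A ⊆ Finset.Icc (1 : ℤ) (N : ℤ))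
    (hcard : δ * (N : ℝ) ≤ (A.card : ℝ)) :
    (N : ℝ) ^ ((1 : ℝ) / (8 * s + 8)) / 3 ^ 8 ≤ (regMax 2 (A - A) : ℝ) := by
  have hs1 : 1 ≤ s := by
    rw [hs, Nat.one_le_iff_ne_zero, ne_eq, Nat.ceil_eq_zero, not_le]
    exact Real.logb_pos one_lt_two ((one_lt_div (by positivity)).2 (by linarith))
  have hη := seven_tenths_le_pow_mul (hs ▸ one_le_mul_two_pow_ceil_logb hδ0)
  have h6N : 6 ^ (8 * s + 8) ≤ N := calc
    6 ^ (8 * s + 8) ≤ 9 ^ (8 * s + 8) := Nat.pow_le_pow_left (by norm_num) _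
    _ = 3 ^ (16 * s + 16) := by rw [show 9 = 3 ^ 2 by rfl, ← pow_mul]; ring_nf
    _ ≤ 3 ^ (73 * s) := Nat.pow_le_pow_right (by norm_num) (by omega)
    _ ≤ N := hN2
  obtain ⟨β, hβ6, hβN, hroot⟩ := exists_nat_pow_le_lt_succ (Nat.cast_nonneg N)
    (by omega : 8 * s + 8 ≠ 0) (by exact_mod_cast h6N)
  obtain ⟨B, hBA, hB, hβB⟩ := exists_isRegularSet_of_density (b := 0) hβ6 (8 * s + 7) one_pos hδ0
    (by exact_mod_cast hβN) hη
    (fun z hz => by have := mem_Icc.1 (hA hz); exact mem_Ico.2 ⟨this.1, by omega⟩) hcard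
    (fun z hz => ⟨z, hz, by simp, by simp⟩)
  have hBreg : (#B : ℝ) ≤ regMax 2 (A - A) := by exact_mod_cast card_le_regMax hBA hB
  have hβB' : (β : ℝ) ≤ 60 * #B := by exact_mod_cast hβB
  have hβ1 : (1 : ℝ) ≤ β := by exact_mod_cast (by omega : 1 ≤ β)
  push_cast at hroot
  rw [div_le_iff₀ (by norm_num)]
  linarith

/-- Let `δ ∈ (0, 1/4)` and `s = ⌈log₂(1/(4δ))⌉`. If `N ≥ max{(2s)^s, 3^(73s)}`
and `A ⊆ {1, …, N}` has `|A| ≥ δN`, then `R_2(A − A) ≥ 3⁻⁸ · N^(1/(8s+8))`. -/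
theorem stmt5 (δ : ℝ) (hδ0 : 0 < δ) (hδ1 : δ < 1 / 4)
    (s : ℕ) (hs : s = ⌈Real.logb 2 (1 / (4 * δ))⌉₊)
    (N : ℕ) (hN0 : 0 < N) (hN1 : (2 * s) ^ s ≤ N) (hN2 : 3 ^ (73 * s) ≤ N)
    (A : Finset ℤ) (hA : A ⊆ Finset.Icc (1 : ℤ) (N : ℤ))
    (hcard : δ * (N : ℝ) ≤ (A.card : ℝ)) :
    (N : ℝ) ^ ((1 : ℝ) / (8 * s + 8)) / 3 ^ 8 ≤ (regMax 2 (A - A) : ℝ) :=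
  stmt5_general δ hδ0 hδ1 s hs N hN2 A hA hcard
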